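/- arXiv:1905.06928 — 2 statements merged into one kernel-verified Lean document; each statement's English description precedes it below -/
import Mathlib

section
/- For any n-qubit density matrix ρ, the state inversion inequality Σ_{k=0}^n (−1)^k A_k(ρ) ≥ 0 holds. -/
open Matrix BigOperators Finset ComplexOrder

/-- The Pauli matrices, indexed by `Fin 4`: identity, X, Y, Z. -/
noncomputable def pauli : Fin 4 → Matrix (Fin 2) (Fin 2) ℂ
  | 0 => 1
  | 1 => !![0, 1; 1, 0]
  | 2 => !![0, -Complex.I; Complex.I, 0]
  | 3 => !![1, 0; 0, -1]

/-- An `n`-qubit Pauli word: the tensor product of the Pauli matrices `pauli (w i)`,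
realized as a matrix indexed by `Fin n → Fin 2`. -/
noncomputable def pWord {n : ℕ} (w : Fin n → Fin 4) :
    Matrix (Fin n → Fin 2) (Fin n → Fin 2) ℂ :=
  Matrix.of fun x y => ∏ i, pauli (w i) (x i) (y i)

/-- The weight of a Pauli word: the number of non-identity tensor factors. -/
def wt {n : ℕ} (w : Fin n → Fin 4) : ℕ :=
  (Finset.univ.filter fun i => w i ≠ 0).card

/-- The `k`-th sector length of an `n`-qubit matrix:
the sum of squared Pauli expectation values over Pauli words of weight `k`. -/
noncomputable def sector (n k : ℕ) (ρ : Matrix (Fin n → Fin 2) (Fin n → Fin 2) ℂ) : ℝ :=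
  ∑ w ∈ Finset.univ.filter fun w : Fin n → Fin 4 => wt w = k,
    ((pWord w * ρ).trace.re) ^ 2

/-- An `n`-qubit quantum state: positive semidefinite with unit trace. -/
def IsState {n : ℕ} (ρ : Matrix (Fin n → Fin 2) (Fin n → Fin 2) ℂ) : Prop :=
  ρ.PosSemidef ∧ ρ.trace = 1

/-!
Grouping Pauli words by weight turns `∑ₖ (-1)ᵏ Aₖ(ρ)` into `∑_w (-1)^{wt w} tr(P_w ρ)²`.
The single-qubit identity `∑ₛ εₛ (σₛ)_{ab} (σₛ)_{cd} = 2 (-1)^{a+b} [c = a+1] [d = b+1]`,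
with `ε = (1, -1, -1, -1)`, tensorises, so this sum is `2ⁿ tr(ρ ρ̃)` for the spin flip
`ρ̃ = σ_y^{⊗n} ρᵀ σ_y^{⊗n}`. Being a congruence of a permuted `ρᵀ`, `ρ̃` is positive
semidefinite, and the trace of a product of two positive semidefinite matrices is nonnegative.
-/

lemma Matrix.PosSemidef.trace_mul_nonneg {𝕜 m : Type*} [RCLike 𝕜] [Fintype m] [DecidableEq m]
    {A B : Matrix m m 𝕜} (hA : A.PosSemidef) (hB : B.PosSemidef) : 0 ≤ (A * B).trace := by
  open scoped MatrixOrder in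
  obtain ⟨C, rfl⟩ := CStarAlgebra.nonneg_iff_eq_star_mul_self.mp hA.nonneg
  rw [star_eq_conjTranspose, Matrix.mul_assoc, trace_mul_comm, Matrix.mul_assoc,
    ← Matrix.mul_assoc C]
  exact (hB.mul_mul_conjTranspose_same C).trace_nonneg

lemma Matrix.IsHermitian.ofReal_re_trace_mul {m : Type*} [Fintype m] {A B : Matrix m m ℂ}
    (hA : A.IsHermitian) (hB : B.IsHermitian) :
    (((A * B).trace.re : ℝ) : ℂ) = (A * B).trace := by
  refine Complex.conj_eq_iff_re.mp ?_
  rw [← Complex.star_def, ← trace_conjTranspose, conjTranspose_mul, hA.eq, hB.eq,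
    trace_mul_comm]

section Qubits

variable {n : ℕ}

lemma pauli_isHermitian (s : Fin 4) : (pauli s).IsHermitian := by
  ext a b
  fin_cases s <;> fin_cases a <;> fin_cases b <;> simp [pauli]

lemma pWord_isHermitian (w : Fin n → Fin 4) : (pWord w).IsHermitian := by
  ext x y
  simp only [conjTranspose_apply, pWord, of_apply, star_prod, (pauli_isHermitian _).apply]

lemma wt_le (w : Fin n → Fin 4) : wt w ≤ n :=
  (card_filter_le _ _).trans_eq (card_fin n)

lemma sum_range_neg_one_pow_mul_sector (ρ : Matrix (Fin n → Fin 2) (Fin n → Fin 2) ℂ) :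
    ∑ k ∈ range (n + 1), (-1 : ℝ) ^ k * sector n k ρ
      = ∑ w : Fin n → Fin 4, (-1 : ℝ) ^ wt w * ((pWord w * ρ).trace.re) ^ 2 := by
  rw [← sum_fiberwise_of_maps_to (g := wt) fun w _ => mem_range.mpr (Nat.lt_succ_of_le (wt_le w))]
  refine sum_congr rfl fun k _ => ?_
  rw [sector, mul_sum]
  exact sum_congr rfl fun w hw => by rw [(mem_filter.mp hw).2]

def bitFlip : (Fin n → Fin 2) ≃ (Fin n → Fin 2) :=
  Equiv.piCongrRight fun _ => Equiv.addRight 1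

@[simp]
lemma bitFlip_apply (x : Fin n → Fin 2) (i : Fin n) : bitFlip x i = x i + 1 := rfl

noncomputable def bitSign (x : Fin n → Fin 2) : ℂ := ∏ i, (-1 : ℂ) ^ (x i : ℕ)

@[simp]
lemma star_bitSign (x : Fin n → Fin 2) : star (bitSign x) = bitSign x := by
  simp [bitSign]

/-- The spin flip `σ_y^{⊗n} ρᵀ σ_y^{⊗n}`, written entrywise. -/
noncomputable def spinFlip (ρ : Matrix (Fin n → Fin 2) (Fin n → Fin 2) ℂ) :
    Matrix (Fin n → Fin 2) (Fin n → Fin 2) ℂ :=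
  of fun a b => bitSign a * bitSign b * ρ (bitFlip b) (bitFlip a)

lemma spinFlip_eq_diagonal_mul_mul (ρ : Matrix (Fin n → Fin 2) (Fin n → Fin 2) ℂ) :
    spinFlip ρ = diagonal bitSign * ρᵀ.submatrix bitFlip bitFlip * (diagonal bitSign)ᴴ := by
  ext a b
  simp [spinFlip, diagonal_conjTranspose]
  ring

lemma Matrix.PosSemidef.spinFlip {ρ : Matrix (Fin n → Fin 2) (Fin n → Fin 2) ℂ}
    (hρ : ρ.PosSemidef) : (spinFlip ρ).PosSemidef := by
  rw [spinFlip_eq_diagonal_mul_mul]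
  exact (hρ.transpose.submatrix _).mul_mul_conjTranspose_same _

noncomputable def pauliSign (s : Fin 4) : ℂ := if s = 0 then 1 else -1

lemma prod_pauliSign (w : Fin n → Fin 4) : ∏ i, pauliSign (w i) = (-1 : ℂ) ^ wt w := by
  simp [pauliSign, prod_ite, wt]

lemma sum_pauliSign_mul_pauli_mul_pauli (a b c d : Fin 2) :
    ∑ s, pauliSign s * pauli s a b * pauli s c d
      = if c = a + 1 ∧ d = b + 1 then 2 * (-1 : ℂ) ^ ((a : ℕ) + b) else 0 := by
  fin_cases a <;> fin_cases b <;> fin_cases c <;> fin_cases d <;>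
    simp [pauliSign, pauli, Fin.sum_univ_four, one_apply, Complex.ext_iff] <;> norm_num

lemma sum_neg_one_pow_wt_mul_pWord_mul_pWord (a b c d : Fin n → Fin 2) :
    ∑ w : Fin n → Fin 4, (-1 : ℂ) ^ wt w * pWord w a b * pWord w c d
      = if c = bitFlip a ∧ d = bitFlip b then 2 ^ n * (bitSign a * bitSign b) else 0 := by
  have hflip : (∀ i, c i = a i + 1 ∧ d i = b i + 1) ↔ c = bitFlip a ∧ d = bitFlip b := by
    simp only [funext_iff, bitFlip_apply, forall_and]
  have hsign : ∏ i, 2 * (-1 : ℂ) ^ ((a i : ℕ) + b i) = 2 ^ n * (bitSign a * bitSign b) := by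
    simp [bitSign, prod_mul_distrib, pow_add]
  calc ∑ w : Fin n → Fin 4, (-1 : ℂ) ^ wt w * pWord w a b * pWord w c d
      = ∑ w : Fin n → Fin 4,
          ∏ i, pauliSign (w i) * pauli (w i) (a i) (b i) * pauli (w i) (c i) (d i) := by
        simp only [← prod_pauliSign, pWord, of_apply, prod_mul_distrib]
    _ = ∏ i, ∑ s, pauliSign s * pauli s (a i) (b i) * pauli s (c i) (d i) :=
        (Fintype.prod_sum fun i s => pauliSign s * pauli s (a i) (b i) * pauli s (c i) (d i)).symm
    _ = _ := by
        simp only [sum_pauliSign_mul_pauli_mul_pauli, Fintype.prod_ite_zero, hflip, hsign]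

lemma sum_neg_one_pow_wt_mul_trace_sq (ρ : Matrix (Fin n → Fin 2) (Fin n → Fin 2) ℂ) :
    ∑ w : Fin n → Fin 4, (-1 : ℂ) ^ wt w * (pWord w * ρ).trace ^ 2
      = 2 ^ n * (ρ * spinFlip ρ).trace := by
  have htr : ∀ w : Fin n → Fin 4, (pWord w * ρ).trace
      = ∑ p : (Fin n → Fin 2) × (Fin n → Fin 2), pWord w p.1 p.2 * ρ p.2 p.1 := by
    intro w
    rw [Fintype.sum_prod_type]
    rfl
  have hflip : ∀ p q : (Fin n → Fin 2) × (Fin n → Fin 2),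
      (q.1 = bitFlip p.1 ∧ q.2 = bitFlip p.2) ↔ q = (bitFlip p.1, bitFlip p.2) :=
    fun _ _ => Prod.ext_iff (y := (_, _)).symm
  calc ∑ w : Fin n → Fin 4, (-1 : ℂ) ^ wt w * (pWord w * ρ).trace ^ 2
      = ∑ p : (Fin n → Fin 2) × (Fin n → Fin 2), ∑ q : (Fin n → Fin 2) × (Fin n → Fin 2),
          ρ p.2 p.1 * ρ q.2 q.1 *
            ∑ w : Fin n → Fin 4, (-1 : ℂ) ^ wt w * pWord w p.1 p.2 * pWord w q.1 q.2 := by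
        simp_rw [htr, sq, sum_mul_sum, mul_sum]
        rw [sum_comm]
        refine sum_congr rfl fun p _ => ?_
        rw [sum_comm]
        exact sum_congr rfl fun q _ => sum_congr rfl fun w _ => by ring
    _ = ∑ p : (Fin n → Fin 2) × (Fin n → Fin 2),
          ρ p.2 p.1 * ρ (bitFlip p.2) (bitFlip p.1) * (2 ^ n * (bitSign p.1 * bitSign p.2)) := by
        simp_rw [sum_neg_one_pow_wt_mul_pWord_mul_pWord, hflip, mul_ite, mul_zero, sum_ite_eq',
          if_pos (mem_univ _)]
    _ = 2 ^ n * (ρ * spinFlip ρ).trace := by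
        rw [Fintype.sum_prod_type, sum_comm, trace, mul_sum]
        refine sum_congr rfl fun a _ => ?_
        rw [diag_apply, mul_apply, mul_sum]
        refine sum_congr rfl fun b _ => ?_
        simp only [spinFlip, of_apply]
        ring

end Qubits

/-- The state inversion inequality: for any `n`-qubit state,
`∑_{k=0}^n (−1)^k A_k(ρ) ≥ 0`. -/
theorem state_inversion_inequality (n : ℕ)
    (ρ : Matrix (Fin n → Fin 2) (Fin n → Fin 2) ℂ) (hρ : IsState ρ) :
    0 ≤ ∑ k ∈ Finset.range (n + 1), (-1 : ℝ) ^ k * sector n k ρ := by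
  obtain ⟨hpsd, -⟩ := hρ
  rw [sum_range_neg_one_pow_mul_sector, ← Complex.zero_le_real]
  push_cast
  simp_rw [(pWord_isHermitian _).ofReal_re_trace_mul hpsd.isHermitian,
    sum_neg_one_pow_wt_mul_trace_sq]
  exact mul_nonneg (pow_nonneg zero_le_two n) (hpsd.trace_mul_nonneg hpsd.spinFlip)
end

section
/- If M is a finite set of pairwise anticommuting n-qubit Pauli words (each squaring to the identity), then for any n-qubit state ρ, Σ_{m∈M} Tr(mρ)² ≤ 1. -/
/-! Put `c m = Tr(m ρ)` and `A = ∑ m ∈ M, c m • m`. Since the words square to `1` and pairwise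
anticommute, the cross terms of `A * A` cancel and `A * A = s • 1` with `s = ∑ m ∈ M, c m ^ 2`.
Moreover `Tr(A ρ) = s`, so nonnegativity of the variance of `A` in the state `ρ`,
`Tr(A ρ) ^ 2 ≤ Tr(A * A * ρ)`, reads `s ^ 2 ≤ s`, whence `s ≤ 1`. -/

open Matrix BigOperators Finset ComplexOrder

namespace Matrix

variable {ι κ R : Type*} [Fintype ι]

theorem of_prod_mul_of_prod [DecidableEq ι] [Fintype κ] [CommSemiring R]
    (A B : ι → Matrix κ κ R) :
    (of fun x y : ι → κ => ∏ i, A i (x i) (y i)) * (of fun x y => ∏ i, B i (x i) (y i)) =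
      of fun x y => ∏ i, (A i * B i) (x i) (y i) := by
  ext x y
  simp only [mul_apply, of_apply, ← prod_mul_distrib]
  exact (Fintype.prod_sum fun i j => A i (x i) j * B i j (y i)).symm

theorem of_prod_one [DecidableEq κ] [CommSemiring R] :
    (of fun x y : ι → κ => ∏ i, (1 : Matrix κ κ R) (x i) (y i)) = 1 := by
  ext x y
  simp [one_apply, Finset.prod_ite_zero, funext_iff]

theorem conjTranspose_of_prod [CommSemiring R] [StarRing R] (A : ι → Matrix κ κ R) :
    (of fun x y : ι → κ => ∏ i, A i (x i) (y i))ᴴ = of fun x y => ∏ i, (A i)ᴴ (x i) (y i) := by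
  ext x y
  simp [star_prod]

end Matrix

theorem pauli_conjTranspose (k : Fin 4) : (pauli k)ᴴ = pauli k := by
  fin_cases k <;> ext a b <;> fin_cases a <;> fin_cases b <;> simp [pauli]

theorem pauli_mul_self (k : Fin 4) : pauli k * pauli k = 1 := by
  fin_cases k <;> ext a b <;> fin_cases a <;> fin_cases b <;> simp [pauli]

theorem isHermitian_pWord {n : ℕ} (w : Fin n → Fin 4) : (pWord w).IsHermitian := by
  rw [IsHermitian, pWord, conjTranspose_of_prod]
  simp only [pauli_conjTranspose]

theorem pWord_mul_self {n : ℕ} (w : Fin n → Fin 4) : pWord w * pWord w = 1 := by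
  rw [pWord, of_prod_mul_of_prod]
  simp only [pauli_mul_self]
  exact of_prod_one

theorem sum_smul_mul_self_of_anticommute {ι R A : Type*} [CommSemiring R] [Semiring A]
    [Algebra R A] (s : Finset ι) (P : ι → A) (c : ι → R)
    (hsq : ∀ i ∈ s, P i * P i = 1)
    (hanti : ∀ i ∈ s, ∀ j ∈ s, i ≠ j → P i * P j + P j * P i = 0) :
    (∑ i ∈ s, c i • P i) * (∑ i ∈ s, c i • P i) = (∑ i ∈ s, c i ^ 2) • (1 : A) := by
  classical
  induction s using Finset.induction_on with
  | empty => simp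
  | insert j s hj ih =>
    have hcross : (∑ i ∈ s, c i • P i) * P j + P j * (∑ i ∈ s, c i • P i) = 0 := by
      rw [Finset.sum_mul, Finset.mul_sum, ← Finset.sum_add_distrib]
      refine Finset.sum_eq_zero fun i hi => ?_
      rw [smul_mul_assoc, mul_smul_comm, ← smul_add,
        hanti i (mem_insert_of_mem hi) j (mem_insert_self j s) (ne_of_mem_of_not_mem hi hj),
        smul_zero]
    rw [sum_insert hj, sum_insert hj, add_smul, ← ih (fun i hi => hsq i (mem_insert_of_mem hi))
      (fun i hi k hk => hanti i (mem_insert_of_mem hi) k (mem_insert_of_mem hk))]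
    calc (c j • P j + ∑ i ∈ s, c i • P i) * (c j • P j + ∑ i ∈ s, c i • P i)
        = c j ^ 2 • (P j * P j) + (∑ i ∈ s, c i • P i) * (∑ i ∈ s, c i • P i) +
            c j • ((∑ i ∈ s, c i • P i) * P j + P j * (∑ i ∈ s, c i • P i)) := by
          simp only [add_mul, mul_add, smul_mul_assoc, mul_smul_comm, smul_smul, smul_add, sq]
          abel
      _ = _ := by rw [hcross, hsq j (mem_insert_self j s), smul_zero, add_zero]

theorem re_trace_mul_self_mul_nonneg {N : Type*} [Fintype N] {B ρ : Matrix N N ℂ}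
    (hB : B.IsHermitian) (hρ : ρ.PosSemidef) : 0 ≤ (B * B * ρ).trace.re := by
  have h := (hρ.conjTranspose_mul_mul_same B).trace_nonneg
  rw [hB.eq, trace_mul_cycle] at h
  exact (Complex.nonneg_iff.mp h).1

theorem sq_re_trace_mul_le {N : Type*} [Fintype N] [DecidableEq N] {A ρ : Matrix N N ℂ}
    (hA : A.IsHermitian) (hρ : ρ.PosSemidef) (hρ1 : ρ.trace = 1) :
    (A * ρ).trace.re ^ 2 ≤ (A * A * ρ).trace.re := by
  set t := (A * ρ).trace.re
  have hB : (A - t • 1).IsHermitian := hA.sub (isHermitian_one.smul (IsSelfAdjoint.all t))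
  have hvar : ((A - t • 1) * (A - t • 1) * ρ).trace.re = (A * A * ρ).trace.re - t ^ 2 := by
    simp only [sub_mul, mul_sub, smul_mul_assoc, mul_smul_comm, one_mul, mul_one,
      trace_sub, trace_smul, Complex.sub_re, Complex.smul_re, hρ1, Complex.one_re, smul_eq_mul]
    ring
  linarith [re_trace_mul_self_mul_nonneg hB hρ]

/-- If `M` is a finite set of pairwise anticommuting `n`-qubit Pauli words,
then for any `n`-qubit state `ρ`, `∑_{m ∈ M} Tr(mρ)² ≤ 1`. -/
theorem anticommuting_pauli_bound (n : ℕ) (M : Finset (Fin n → Fin 4))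
    (hM : ∀ m ∈ M, ∀ m' ∈ M, m ≠ m' →
      pWord m * pWord m' + pWord m' * pWord m = 0)
    (ρ : Matrix (Fin n → Fin 2) (Fin n → Fin 2) ℂ) (hρ : IsState ρ) :
    ∑ m ∈ M, ((pWord m * ρ).trace.re) ^ 2 ≤ 1 := by
  obtain ⟨hρ, hρ1⟩ := hρ
  set c : (Fin n → Fin 4) → ℝ := fun m => (pWord m * ρ).trace.re
  set s := ∑ m ∈ M, c m ^ 2
  set A := ∑ m ∈ M, c m • pWord m
  have hA : A.IsHermitian :=
    isSelfAdjoint_sum M fun m _ => (isHermitian_pWord m).smul (IsSelfAdjoint.all (c m))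
  have hAA : A * A = s • 1 :=
    sum_smul_mul_self_of_anticommute M pWord c (fun m _ => pWord_mul_self m) hM
  have hAρ : (A * ρ).trace.re = s := by
    simp only [A, s, sum_mul, trace_sum, Complex.re_sum, smul_mul_assoc, trace_smul,
      Complex.smul_re, smul_eq_mul, sq, c]
  have hs : s ^ 2 ≤ s := by
    simpa only [hAA, hAρ, smul_mul_assoc, one_mul, trace_smul, hρ1, Complex.smul_re,
      Complex.one_re, smul_eq_mul, mul_one] using sq_re_trace_mul_le hA hρ hρ1
  nlinarith [sq_nonneg (s - 1)]
end
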